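/- arXiv:1506.09112 — 3 statements merged into one kernel-verified Lean document; each statement's English description precedes it below -/
import Mathlib

section
/- Let G be a finite group with subgroups H, H', Γ, all sets equipped with counting measure normalized as indicated. For a function f : G → ℂ define Θ(f) = (1/|Γ∩H|)(1/|Γ∩H'|) Σ_{h∈H} Σ_{h'∈H'} Σ_{γ∈Γ} f(h'γh). For γ ∈ Γ let (H'×H)_γ = {(h',h) : h'γh⁻¹ = γ} and I([γ], f) = Σ over a set of representatives of (H'×H)_γ\(H'×H) of f(h'γh⁻¹). Then Θ(f) = Σ_{[γ] ∈ (H'∩Γ)\Γ/(Γ∩H)} vol((H'∩Γ × H∩Γ)_γ \ (H'×H)_γ) · I([γ], f), where the volume factor equals the index [(H'×H)_γ : (H'∩Γ × H∩Γ)_γ]. -/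
open scoped BigOperators Classical

/-- The stabilizer `(H'×H)_γ = {(h',h) ∈ H'×H : h'γh⁻¹ = γ}` as a finset. -/
noncomputable def relStab {G : Type*} [Group G] [Fintype G]
    (H' H : Subgroup G) (γ : G) : Finset (G × G) :=
  Finset.univ.filter fun p => p.1 ∈ H' ∧ p.2 ∈ H ∧ p.1 * γ * p.2⁻¹ = γ

/-- The orbital integral `I([γ],f)`, a sum of `f(h'γh⁻¹)` over a set of
representatives of `(H'×H)_γ \ (H'×H)`, realized as the full sum divided by
the cardinality of the stabilizer. -/
noncomputable def orbitalIntegral {G : Type*} [Group G] [Fintype G]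
    (H' H : Subgroup G) (γ : G) (f : G → ℂ) : ℂ :=
  ((relStab H' H γ).card : ℂ)⁻¹ *
    ∑ h' : H', ∑ h : H, f ((h' : G) * γ * (h : G)⁻¹)

/-!
Put `g(x) = Σ_{h' ∈ H'} Σ_{h ∈ H} f(h' x h⁻¹)`. Reindexing turns `Θ(f)` into
`Σ_{γ ∈ Γ} g(γ)` divided by `|H' ∩ Γ| |Γ ∩ H|`, and `g` is left `H'`- and right `H`-invariant,
hence constant on each double coset `(H' ∩ Γ) r (Γ ∩ H)`. The fibres of
`(a, b) ↦ a r b⁻¹` on `(H' ∩ Γ) × (Γ ∩ H)` are translates of `(H' ∩ Γ × H ∩ Γ)_r`, so the double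
coset of `r` contributes `|H' ∩ Γ| |Γ ∩ H| g(r) / |(H' ∩ Γ × H ∩ Γ)_r|`, while
`I([r], f) = g(r) / |(H' × H)_r|`.
-/

open Finset DoubleCoset

section
variable {G : Type*} [Group G] [Fintype G]

noncomputable def orbitalSum (H' H : Subgroup G) (f : G → ℂ) (x : G) : ℂ :=
  ∑ h' : H', ∑ h : H, f ((h' : G) * x * (h : G)⁻¹)

lemma orbitalIntegral_eq_inv_mul_orbitalSum (H' H : Subgroup G) (γ : G) (f : G → ℂ) :
    orbitalIntegral H' H γ f = (#(relStab H' H γ) : ℂ)⁻¹ * orbitalSum H' H f γ :=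
  rfl

lemma card_relStab_ne_zero (H' H : Subgroup G) (γ : G) : #(relStab H' H γ) ≠ 0 :=
  card_ne_zero_of_mem (a := (1, 1)) (by simp [relStab, one_mem])

lemma orbitalSum_mul_mul_inv {H' H : Subgroup G} (f : G → ℂ) {a b : G} (ha : a ∈ H')
    (hb : b ∈ H) (x : G) : orbitalSum H' H f (a * x * b⁻¹) = orbitalSum H' H f x := by
  refine Fintype.sum_equiv (Equiv.mulRight ⟨a, ha⟩) _ _ fun h' => ?_
  refine Fintype.sum_equiv (Equiv.mulRight ⟨b, hb⟩) _ _ fun h => ?_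
  simp only [Equiv.coe_mulRight, Subgroup.coe_mul, mul_inv_rev, mul_assoc]

lemma sum_sum_sum_eq_sum_orbitalSum (H H' Γ : Subgroup G) (f : G → ℂ) :
    ∑ h : H, ∑ h' : H', ∑ γ : Γ, f ((h' : G) * (γ : G) * (h : G)) =
      ∑ γ : Γ, orbitalSum H' H f γ := by
  rw [← Fintype.sum_equiv (Equiv.inv H) (fun h => ∑ h' : H', ∑ γ : Γ, f (h' * γ * (h : G)⁻¹)) _
    fun h => by simp]
  simp only [orbitalSum]
  rw [sum_comm]
  exact (sum_congr rfl fun _ _ => sum_comm).trans sum_comm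

lemma card_filter_eq_card_relStab {A B : Subgroup G} (r : G) {q : G × G}
    (hq : q.1 ∈ A ∧ q.2 ∈ B) :
    #{p ∈ (A : Set G).toFinset ×ˢ (B : Set G).toFinset | p.1 * r * p.2⁻¹ = q.1 * r * q.2⁻¹} =
      #(relStab A B r) := by
  refine card_nbij' (q⁻¹ * ·) (q * ·) ?_ ?_ (fun p _ => by simp) (fun p _ => by simp)
  · intro p hp
    simp only [relStab, coe_filter, mem_product, Set.mem_toFinset, mem_univ, true_and,
      Set.mem_ofPred_eq] at hp ⊢
    obtain ⟨⟨hp₁, hp₂⟩, hp⟩ := hp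
    refine ⟨mul_mem (inv_mem hq.1) hp₁, mul_mem (inv_mem hq.2) hp₂, ?_⟩
    calc q.1⁻¹ * p.1 * r * (q.2⁻¹ * p.2)⁻¹ = q.1⁻¹ * (p.1 * r * p.2⁻¹) * q.2 := by group
      _ = r := by rw [hp]; group
  · intro p hp
    simp only [relStab, coe_filter, mem_product, Set.mem_toFinset, mem_univ, true_and,
      Set.mem_ofPred_eq] at hp ⊢
    obtain ⟨hp₁, hp₂, hp⟩ := hp
    refine ⟨⟨mul_mem hq.1 hp₁, mul_mem hq.2 hp₂⟩, ?_⟩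
    calc q.1 * p.1 * r * (q.2 * p.2)⁻¹ = q.1 * (p.1 * r * p.2⁻¹) * q.2⁻¹ := by group
      _ = q.1 * r * q.2⁻¹ := by rw [hp]

lemma card_relStab_smul_sum_doubleCoset {M : Type*} [AddCommMonoid M] (A B : Subgroup G)
    (r : G) (F : G → M) :
    #(relStab A B r) • ∑ x ∈ (doubleCoset r A B).toFinset, F x =
      ∑ p ∈ (A : Set G).toFinset ×ˢ (B : Set G).toFinset, F (p.1 * r * p.2⁻¹) := by
  have hmaps : ∀ p ∈ (A : Set G).toFinset ×ˢ (B : Set G).toFinset,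
      p.1 * r * p.2⁻¹ ∈ (doubleCoset r A B).toFinset := by
    intro p hp
    simp only [mem_product, Set.mem_toFinset] at hp
    simpa only [Set.mem_toFinset, mem_doubleCoset] using ⟨p.1, hp.1, p.2⁻¹, inv_mem hp.2, rfl⟩
  rw [← sum_fiberwise_of_maps_to' hmaps F, smul_sum]
  refine sum_congr rfl fun x hx => ?_
  obtain ⟨a, ha, b, hb, rfl⟩ := mem_doubleCoset.mp (Set.mem_toFinset.mp hx)
  have hfiber := card_filter_eq_card_relStab r (q := (a, b⁻¹)) ⟨ha, inv_mem hb⟩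
  rw [inv_inv] at hfiber
  rw [sum_const, hfiber]

lemma card_relStab_mul_sum_doubleCoset_orbitalSum {H' H A B : Subgroup G} (hA : A ≤ H')
    (hB : B ≤ H) (f : G → ℂ) (r : G) :
    #(relStab A B r) * ∑ x ∈ (doubleCoset r A B).toFinset, orbitalSum H' H f x =
      Nat.card A * Nat.card B * orbitalSum H' H f r := by
  have hmem : ∀ p ∈ (A : Set G).toFinset ×ˢ (B : Set G).toFinset, p.1 ∈ A ∧ p.2 ∈ B := by
    simp
  rw [← nsmul_eq_mul, card_relStab_smul_sum_doubleCoset,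
    sum_congr rfl fun p hp => orbitalSum_mul_mul_inv f (hA (hmem p hp).1) (hB (hmem p hp).2) r,
    sum_const, card_product, ← Nat.card_eq_card_toFinset, ← Nat.card_eq_card_toFinset,
    nsmul_eq_mul, Nat.cast_mul]
  rfl

lemma sum_eq_sum_sum_doubleCoset {M : Type*} [AddCommMonoid M] {Γ A B : Subgroup G}
    (hA : A ≤ Γ) (hB : B ≤ Γ) {R : Finset G} (hRΓ : ∀ r ∈ R, r ∈ Γ)
    (hR : ∀ γ ∈ Γ, ∃! r, r ∈ R ∧ γ ∈ doubleCoset r A B) (F : G → M) :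
    ∑ γ : Γ, F γ = ∑ r ∈ R, ∑ x ∈ (doubleCoset r A B).toFinset, F x := by
  have hcover : ∀ x, x ∈ R.biUnion (fun r => (doubleCoset r A B).toFinset) ↔ x ∈ Γ := by
    intro x
    simp only [mem_biUnion, Set.mem_toFinset]
    constructor
    · rintro ⟨r, hr, hx⟩
      obtain ⟨a, ha, b, hb, rfl⟩ := mem_doubleCoset.mp hx
      exact mul_mem (mul_mem (hA ha) (hRΓ r hr)) (hB hb)
    · exact fun hx => (hR x hx).exists
  have hdisj : Set.PairwiseDisjoint ↑R fun r => (doubleCoset r (A : Set G) B).toFinset := by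
    intro r hr s hs hne
    refine disjoint_left.mpr fun x hxr hxs => hne ?_
    have hx : x ∈ Γ := (hcover x).mp (mem_biUnion.mpr ⟨r, hr, hxr⟩)
    rw [Set.mem_toFinset] at hxr hxs
    exact (hR x hx).unique ⟨hr, hxr⟩ ⟨hs, hxs⟩
  rw [← sum_subtype _ hcover, sum_biUnion hdisj]

end

/-- Geometric expansion of the distribution `Θ(f)` for finite groups:
`Θ(f) = Σ_{[γ]} vol((H'∩Γ × H∩Γ)_γ \ (H'×H)_γ) · I([γ],f)`, the sum running over a
set `R` of representatives of the double cosets `(H'∩Γ)\Γ/(Γ∩H)`, the volume factor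
being the index `[(H'×H)_γ : (H'∩Γ × H∩Γ)_γ]`. -/
theorem geometric_side_finite_groups {G : Type*} [Group G] [Fintype G]
    (H H' Γ : Subgroup G) (f : G → ℂ) (R : Finset G)
    (hRΓ : ∀ r ∈ R, r ∈ Γ)
    (hR : ∀ γ ∈ Γ, ∃! r, r ∈ R ∧ ∃ a ∈ H' ⊓ Γ, ∃ b ∈ Γ ⊓ H, γ = a * r * b) :
    (Nat.card (H ⊓ Γ : Subgroup G) : ℂ)⁻¹ * (Nat.card (H' ⊓ Γ : Subgroup G) : ℂ)⁻¹ *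
      ∑ h : H, ∑ h' : H', ∑ γ : Γ, f ((h' : G) * (γ : G) * (h : G)) =
    ∑ r ∈ R,
      (((relStab H' H r).card : ℂ) / ((relStab (H' ⊓ Γ) (H ⊓ Γ) r).card : ℂ)) *
        orbitalIntegral H' H r f := by
  rw [inf_comm H Γ, sum_sum_sum_eq_sum_orbitalSum,
    sum_eq_sum_sum_doubleCoset inf_le_right inf_le_left hRΓ
      (by simpa only [mem_doubleCoset, SetLike.mem_coe] using hR), mul_sum]
  refine sum_congr rfl fun r _ => ?_
  have hcount := card_relStab_mul_sum_doubleCoset_orbitalSum (A := H' ⊓ Γ) (B := Γ ⊓ H)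
    inf_le_left inf_le_right f r
  have hS : (#(relStab H' H r) : ℂ) ≠ 0 := by exact_mod_cast card_relStab_ne_zero H' H r
  have hS' : (#(relStab (H' ⊓ Γ) (Γ ⊓ H) r) : ℂ) ≠ 0 := by
    exact_mod_cast card_relStab_ne_zero _ _ r
  have hA : (Nat.card (H' ⊓ Γ : Subgroup G) : ℂ) ≠ 0 := by exact_mod_cast Nat.card_pos.ne'
  have hB : (Nat.card (Γ ⊓ H : Subgroup G) : ℂ) ≠ 0 := by exact_mod_cast Nat.card_pos.ne'
  rw [orbitalIntegral_eq_inv_mul_orbitalSum]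
  field_simp
  linear_combination hcount
end

section
/- Let (αᵢ)_{i∈I} be a finite basis of a real inner product space V such that (αᵢ, αⱼ) ≤ 0 for all i ≠ j (an obtuse basis), and let (ω̃ᵢ) be the dual basis, i.e. (αᵢ, ω̃ⱼ) = δᵢⱼ. Suppose Y¹, Y² ∈ V satisfy (αᵢ, Yʲ) > 0 for all i ∈ I and j ∈ {1,2}. Define Z ∈ V by the conditions (ω̃ᵢ, Z) = min((ω̃ᵢ, Y¹), (ω̃ᵢ, Y²)) for all i. Then (αᵢ, Z) > 0 for all i ∈ I. (Here one uses that (αᵢ,Yʲ) > 0 for all i implies (ω̃ᵢ, Yʲ) > 0 for all i.) -/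
/-!
Expanding in the obtuse basis `b`, the coordinates of a vector are its inner products with the
dual basis `ω`. Fix `i` and let `Y` be whichever of `Y1`, `Y2` attains the minimum at `i`.
Then `Z` and `Y` have the same `i`-th coordinate and `Z` has the smaller coordinates elsewhere;
since `⟪b i, b j⟫ ≤ 0` for `j ≠ i`, lowering those coordinates can only raise `⟪b i, ·⟫`,
so `⟪b i, Z⟫ ≥ ⟪b i, Y⟫ > 0`.
-/

open scoped RealInnerProductSpace

section

variable {ι V : Type*} [Fintype ι] [NormedAddCommGroup V] [InnerProductSpace ℝ V]

theorem inner_sum_smul_le_of_obtuse (b : ι → V) (obtuse : ∀ i j, i ≠ j → ⟪b i, b j⟫ ≤ 0)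
    {c d : ι → ℝ} (i : ι) (hle : c ≤ d) (hi : c i = d i) :
    ⟪b i, ∑ j, d j • b j⟫ ≤ ⟪b i, ∑ j, c j • b j⟫ := by
  simp only [inner_sum, real_inner_smul_right]
  refine Finset.sum_le_sum fun j _ => ?_
  by_cases hj : j = i
  · rw [hj, hi]
  · exact mul_le_mul_of_nonpos_right (hle j) (obtuse i j (Ne.symm hj))

namespace Module.Basis

variable [DecidableEq ι] (b : Basis ι ℝ V) {ω : ι → V}

theorem inner_dual_eq_repr (hdual : ∀ i j, ⟪b i, ω j⟫ = if i = j then 1 else 0) (Y : V)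
    (j : ι) : ⟪ω j, Y⟫ = b.repr Y j := by
  rw [real_inner_comm]
  conv_lhs => rw [← b.sum_repr Y]
  simp only [sum_inner, real_inner_smul_left, hdual, mul_ite, mul_one, mul_zero,
    Finset.sum_ite_eq', Finset.mem_univ, if_true]

theorem sum_inner_dual_smul (hdual : ∀ i j, ⟪b i, ω j⟫ = if i = j then 1 else 0) (Y : V) :
    ∑ j, ⟪ω j, Y⟫ • b j = Y := by
  simp only [b.inner_dual_eq_repr hdual, b.sum_repr]

end Module.Basis

end

/-- Let `(αᵢ) = (b i)` be an obtuse basis of a real inner product space, `(ω i)` the dual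
basis (`⟪b i, ω j⟫ = δᵢⱼ`). If `⟪b i, Y¹⟫ > 0` and `⟪b i, Y²⟫ > 0` for all `i`, and
`Z = Σᵢ min(⟪ω i, Y¹⟫, ⟪ω i, Y²⟫) • b i` (equivalently `⟪ω i, Z⟫ = min(...)` for all `i`),
then `⟪b i, Z⟫ > 0` for all `i`. -/
theorem obtuse_basis_min_positive {ι V : Type*} [Fintype ι] [DecidableEq ι]
    [NormedAddCommGroup V] [InnerProductSpace ℝ V]
    (b : Module.Basis ι ℝ V) (obtuse : ∀ i j, i ≠ j → ⟪b i, b j⟫ ≤ 0)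
    (ω : ι → V) (hdual : ∀ i j, ⟪b i, ω j⟫ = if i = j then 1 else 0)
    (Y1 Y2 : V) (h1 : ∀ i, 0 < ⟪b i, Y1⟫) (h2 : ∀ i, 0 < ⟪b i, Y2⟫)
    (Z : V) (hZ : Z = ∑ i, min ⟪ω i, Y1⟫ ⟪ω i, Y2⟫ • b i) :
    ∀ i, 0 < ⟪b i, Z⟫ := by
  intro i
  have of_min_attained (Y : V) (hpos : 0 < ⟪b i, Y⟫)
      (hle : ∀ j, min ⟪ω j, Y1⟫ ⟪ω j, Y2⟫ ≤ ⟪ω j, Y⟫)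
      (hi : min ⟪ω i, Y1⟫ ⟪ω i, Y2⟫ = ⟪ω i, Y⟫) : 0 < ⟪b i, Z⟫ :=
    calc 0 < ⟪b i, Y⟫ := hpos
      _ = ⟪b i, ∑ j, ⟪ω j, Y⟫ • b j⟫ := by rw [b.sum_inner_dual_smul hdual]
      _ ≤ ⟪b i, Z⟫ := hZ ▸ inner_sum_smul_le_of_obtuse b obtuse i hle hi
  rcases le_total ⟪ω i, Y1⟫ ⟪ω i, Y2⟫ with h | h
  · exact of_min_attained Y1 (h1 i) (fun _ => min_le_left _ _) (min_eq_left h)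
  · exact of_min_attained Y2 (h2 i) (fun _ => min_le_right _ _) (min_eq_right h)
end

section
/- Let (αᵢ)_{i∈I} be a finite basis of a real inner product space V with (αᵢ, αⱼ) ≤ 0 for i ≠ j, and Gram matrix positive definite. If Y ∈ V satisfies (αᵢ, Y) > 0 for all i, then writing Y = Σᵢ yᵢ αᵢ, all coefficients yᵢ are strictly positive. -/
/-!
Write `Y = P - N`, where `P` and `N` collect the positive and the negative parts of the
coordinates of `Y`. Since the two parts have disjoint supports and the basis is obtuse,
`⟪N, P⟫ ≤ 0`, while `⟪N, Y⟫ ≥ 0` because `Y` pairs positively with every basis vector.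
Hence `‖N‖² = ⟪N, P⟫ - ⟪N, Y⟫ ≤ 0`, so `N = 0` and all coordinates are nonnegative.
Strict positivity follows from `⟪b i, Y⟫ ≤ yᵢ ‖b i‖²`.
-/

open scoped RealInnerProductSpace

section ObtuseFamily

variable {ι V : Type*} [Fintype ι] [NormedAddCommGroup V] [InnerProductSpace ℝ V]

theorem inner_sum_smul_sum_smul_nonpos_of_pairwise_inner_nonpos {v : ι → V}
    (hv : Pairwise fun i j => ⟪v i, v j⟫ ≤ 0) {a c : ι → ℝ} (ha : 0 ≤ a) (hc : 0 ≤ c)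
    (hac : ∀ i, a i * c i = 0) :
    ⟪∑ i, a i • v i, ∑ j, c j • v j⟫ ≤ 0 := by
  rw [sum_inner]
  refine Finset.sum_nonpos fun i _ => ?_
  rw [inner_sum]
  refine Finset.sum_nonpos fun j _ => ?_
  rw [real_inner_smul_left, real_inner_smul_right, ← mul_assoc]
  obtain rfl | hij := eq_or_ne i j
  · rw [hac, zero_mul]
  · exact mul_nonpos_of_nonneg_of_nonpos (mul_nonneg (ha i) (hc j)) (hv hij)

theorem Module.Basis.repr_nonneg_of_pairwise_inner_nonpos (b : Module.Basis ι ℝ V)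
    (hb : Pairwise fun i j => ⟪b i, b j⟫ ≤ 0) {Y : V} (hY : ∀ i, 0 ≤ ⟪b i, Y⟫) (i : ι) :
    0 ≤ b.repr Y i := by
  set y := fun j => b.repr Y j
  set P := ∑ j, (y j)⁺ • b j
  set N := ∑ j, (y j)⁻ • b j
  have hY_eq : Y = P - N := by
    conv_lhs => rw [← b.sum_repr Y]
    simp only [P, N, ← Finset.sum_sub_distrib, ← sub_smul, posPart_sub_negPart, y]
  have hNP : ⟪N, P⟫ ≤ 0 :=
    inner_sum_smul_sum_smul_nonpos_of_pairwise_inner_nonpos hb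
      (fun j => negPart_nonneg (y j)) (fun j => posPart_nonneg (y j)) fun j => by
        rcases le_total 0 (y j) with h | h <;> simp [h]
  have hNY : 0 ≤ ⟪N, Y⟫ := by
    rw [sum_inner]
    refine Finset.sum_nonneg fun j _ => ?_
    rw [real_inner_smul_left]
    exact mul_nonneg (negPart_nonneg _) (hY j)
  have hN : N = 0 := by
    have hNN : ⟪N, N⟫ = ⟪N, P⟫ - ⟪N, Y⟫ := by
      rw [← inner_sub_right, hY_eq, sub_sub_cancel]
    exact real_inner_self_nonpos.mp (by linarith)
  have hy_neg : (y i)⁻ = 0 :=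
    Fintype.linearIndependent_iff.mp b.linearIndependent (fun j => (y j)⁻) hN i
  exact negPart_eq_zero.mp hy_neg

theorem Module.Basis.inner_le_repr_mul_inner_self_of_pairwise_inner_nonpos
    (b : Module.Basis ι ℝ V) (hb : Pairwise fun i j => ⟪b i, b j⟫ ≤ 0) {Y : V}
    (hY : ∀ j, 0 ≤ b.repr Y j) (i : ι) :
    ⟪b i, Y⟫ ≤ b.repr Y i * ⟪b i, b i⟫ := by
  classical
  calc ⟪b i, Y⟫ = ∑ j, b.repr Y j * ⟪b i, b j⟫ := by
        conv_lhs => rw [← b.sum_repr Y]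
        simp only [inner_sum, real_inner_smul_right]
    _ ≤ ∑ j, if j = i then b.repr Y i * ⟪b i, b i⟫ else 0 := by
        refine Finset.sum_le_sum fun j _ => ?_
        split_ifs with hji
        · rw [hji]
        · exact mul_nonpos_of_nonneg_of_nonpos (hY j) (hb (Ne.symm hji))
    _ = b.repr Y i * ⟪b i, b i⟫ := by simp

end ObtuseFamily

/-- If `(b i)` is an obtuse basis of a real inner product space (pairwise inner
products `≤ 0`) and `Y` satisfies `⟪b i, Y⟫ > 0` for all `i`, then all coordinates of
`Y` in the basis `b` are strictly positive. -/
theorem obtuse_basis_positive_coords {ι V : Type*} [Fintype ι]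
    [NormedAddCommGroup V] [InnerProductSpace ℝ V]
    (b : Module.Basis ι ℝ V) (obtuse : ∀ i j, i ≠ j → ⟪b i, b j⟫ ≤ 0)
    (Y : V) (hY : ∀ i, 0 < ⟪b i, Y⟫) :
    ∀ i, 0 < b.repr Y i := by
  have hnonneg : ∀ i, 0 ≤ b.repr Y i :=
    b.repr_nonneg_of_pairwise_inner_nonpos obtuse fun i => (hY i).le
  intro i
  exact pos_of_mul_pos_left
    ((hY i).trans_le (b.inner_le_repr_mul_inner_self_of_pairwise_inner_nonpos obtuse hnonneg i))
    real_inner_self_nonneg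
end
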